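/- arXiv:2506.01315 — 3 statements merged into one kernel-verified Lean document; each statement's English description precedes it below -/
import Mathlib

section
/- If λ is a Z₂-characteristic function on P with λ(i) = e_i for i = 1, 2, 3, 4, then the third and fourth coordinates of λ(6) both equal 1; that is, λ(6) = (c₁, c₂, 1, 1) for some c₁, c₂ ∈ ZMod 2. -/
/-- The standard basis vector `e_{i+1}` of `V = Fin 4 → ZMod 2`:
`stdBasis i` is `1` at coordinate `i` and `0` elsewhere. -/
def stdBasis (i : Fin 4) : Fin 4 → ZMod 2 := fun j => if j = i then 1 else 0

/-- The nine 4-element sets of facet indices (0-indexed: facet `Fᵢ` is index `i-1`)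
occurring at the nine vertices of `P = Δ² × Δ²`. -/
def vertexSets : Finset (Finset (Fin 6)) :=
  { {0,1,2,3}, {0,1,2,5}, {0,1,3,5}, {0,2,3,4}, {0,2,4,5},
    {0,3,4,5}, {1,2,3,4}, {1,2,4,5}, {1,3,4,5} }

/-- `lam : Fin 6 → V` (index `i : Fin 6` encodes facet `F_{i+1}`) is a
`Z₂`-characteristic function on `P = Δ² × Δ²` if for each vertex set `S`, the
family `(lam i)_{i ∈ S}` is linearly independent over `ZMod 2`. -/
def IsCharFn (lam : Fin 6 → (Fin 4 → ZMod 2)) : Prop :=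
  ∀ S ∈ vertexSets,
    LinearIndependent (ZMod 2) (fun i : {x : Fin 6 // x ∈ S} => lam i.1)

/-- If the family `(lam i)_{i ∈ S}` is linearly independent, `5 ∈ S`, and some
linear combination with coefficient `1` at `5` sums to zero, contradiction. -/
lemma aux_dep (lam : Fin 6 → (Fin 4 → ZMod 2)) (S : Finset (Fin 6))
    (hli : LinearIndependent (ZMod 2) (fun i : {x : Fin 6 // x ∈ S} => lam i.1))
    (h5 : (5:Fin 6) ∈ S) (g : Fin 6 → ZMod 2) (hg5 : g 5 = 1)
    (hsum : ∑ i ∈ S, g i • lam i = 0) : False := by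
  have := Fintype.linearIndependent_iff.mp hli (fun i => g i.1) ?_ ⟨5, h5⟩
  · rw [hg5] at this; exact one_ne_zero this
  · rw [← Finset.sum_coe_sort S (fun i => g i • lam i)] at hsum
    exact hsum

/-- If `λ` is a `Z₂`-characteristic function on `P` with `λ(i) = e_i` for
`i = 1, 2, 3, 4`, then the third and fourth coordinates of `λ(F₆)` both equal `1`. -/
theorem stmt2 (lam : Fin 6 → (Fin 4 → ZMod 2)) (h : IsCharFn lam)
    (h4 : ∀ i : Fin 4, lam (Fin.castLE (by norm_num) i) = stdBasis i) :
    lam 5 2 = 1 ∧ lam 5 3 = 1 := by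
  have e0 : lam 0 = stdBasis 0 := h4 0
  have e1 : lam 1 = stdBasis 1 := h4 1
  have e2 : lam 2 = stdBasis 2 := h4 2
  have e3 : lam 3 = stdBasis 3 := h4 3
  have two : ∀ x : ZMod 2, x ≠ 1 → x = 0 := by decide
  constructor
  · by_contra hc
    have hc0 := two _ hc
    apply aux_dep lam {0,1,3,5} (h _ (by decide)) (by decide)
      ![lam 5 0, lam 5 1, 0, lam 5 3, 0, 1] rfl
    rw [Finset.sum_insert (by decide), Finset.sum_insert (by decide),
      Finset.sum_insert (by decide), Finset.sum_singleton]
    funext k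
    fin_cases k <;>
      simp [e0, e1, e3, stdBasis, hc0, CharTwo.add_self_eq_zero,
        show ![lam 5 0, lam 5 1, 0, lam 5 3, 0, 1] (5:Fin 6) = 1 from rfl]
  · by_contra hc
    have hc0 := two _ hc
    apply aux_dep lam {0,1,2,5} (h _ (by decide)) (by decide)
      ![lam 5 0, lam 5 1, lam 5 2, 0, 0, 1] rfl
    rw [Finset.sum_insert (by decide), Finset.sum_insert (by decide),
      Finset.sum_insert (by decide), Finset.sum_singleton]
    funext k
    fin_cases k <;>
      simp [e0, e1, e2, stdBasis, hc0, CharTwo.add_self_eq_zero,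
        show ![lam 5 0, lam 5 1, lam 5 2, 0, 0, 1] (5:Fin 6) = 1 from rfl]
end

section
/- If λ is a Z₂-characteristic function on P with λ(i) = e_i for i = 1, 2, 3, 4, λ(5) = (1,1,c₃,c₄) and λ(6) = (c₁,c₂,1,1) for some c₁, c₂, c₃, c₄ ∈ ZMod 2, and (c₁, c₂) ≠ (0, 0), then c₃ = 0 and c₄ = 0. -/
/-- The vector `(a,b,c,d)` of `V = Fin 4 → ZMod 2`. -/
def vec (a b c d : ZMod 2) : Fin 4 → ZMod 2 := ![a, b, c, d]

lemma contra' (lam v : Fin 6 → (Fin 4 → ZMod 2)) (hv : ∀ i, lam i = v i)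
    (S : Finset (Fin 6))
    (hli : LinearIndependent (ZMod 2) (fun i : {x : Fin 6 // x ∈ S} => lam i.1))
    (G : Fin 6 → ZMod 2) (hsum : ∑ i ∈ S, G i • v i = 0)
    (i : Fin 6) (hi : i ∈ S) (hGi : G i ≠ 0) : False := by
  have hsum' : ∑ j ∈ S, G j • lam j = 0 := by simp only [hv]; exact hsum
  rw [← Finset.sum_attach S (fun j => G j • lam j)] at hsum'
  exact hGi (Fintype.linearIndependent_iff.mp hli (fun j => G j.1) hsum' ⟨i, hi⟩)

lemma contra2 (lam v : Fin 6 → (Fin 4 → ZMod 2)) (hv : ∀ i, lam i = v i)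
    (S : Finset (Fin 6))
    (hli : LinearIndependent (ZMod 2) (fun i : {x : Fin 6 // x ∈ S} => lam i.1))
    (hsum : ∑ i ∈ S,
      (if hj : i.1 < 4 then (v 4 + v 5) ⟨i.1, hj⟩ else 1) • v i = 0)
    (hi : (4 : Fin 6) ∈ S) : False := by
  refine contra' lam v hv S hli
    (fun j => if hj : j.1 < 4 then (v 4 + v 5) ⟨j.1, hj⟩ else 1) hsum 4 hi ?_
  show (if hj : ((4:Fin 6)).1 < 4 then (v 4 + v 5) ⟨_, hj⟩ else 1) ≠ 0
  rw [dif_neg (by decide)]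
  exact one_ne_zero

/-- If `λ` is a `Z₂`-characteristic function on `P` with `λ(i) = e_i` for
`i = 1, 2, 3, 4`, `λ(F₅) = (1,1,c₃,c₄)` and `λ(F₆) = (c₁,c₂,1,1)` with
`(c₁, c₂) ≠ (0, 0)`, then `c₃ = 0` and `c₄ = 0`. -/
theorem stmt6 (lam : Fin 6 → (Fin 4 → ZMod 2)) (c₁ c₂ c₃ c₄ : ZMod 2)
    (h : IsCharFn lam)
    (h4 : ∀ i : Fin 4, lam (Fin.castLE (by norm_num) i) = stdBasis i)
    (h5 : lam 4 = vec 1 1 c₃ c₄) (h6 : lam 5 = vec c₁ c₂ 1 1)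
    (hne : (c₁, c₂) ≠ (0, 0)) :
    c₃ = 0 ∧ c₄ = 0 := by
  have hM : ∀ i : Fin 6,
      lam i = ![stdBasis 0, stdBasis 1, stdBasis 2, stdBasis 3,
                vec 1 1 c₃ c₄, vec c₁ c₂ 1 1] i := by
    intro i
    fin_cases i
    · exact h4 0
    · exact h4 1
    · exact h4 2
    · exact h4 3
    · exact h5
    · exact h6
  have h2 : ∀ x : ZMod 2, x = 0 ∨ x = 1 := by decide
  rcases h2 c₁ with rfl | rfl <;> rcases h2 c₂ with rfl | rfl <;>
    rcases h2 c₃ with rfl | rfl <;> rcases h2 c₄ with rfl | rfl <;>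
    first
    | exact ⟨rfl, rfl⟩
    | exact (hne rfl).elim
    | exact (contra2 lam _ hM {0,2,4,5} (h _ (by decide)) (by decide) (by decide)).elim
    | exact (contra2 lam _ hM {0,3,4,5} (h _ (by decide)) (by decide) (by decide)).elim
    | exact (contra2 lam _ hM {1,2,4,5} (h _ (by decide)) (by decide) (by decide)).elim
    | exact (contra2 lam _ hM {1,3,4,5} (h _ (by decide)) (by decide) (by decide)).elim
end

section
/- Let λ : {1,…,6} → V satisfy λ(i) = e_i for i = 1, 2, 3, 4. Then λ is a Z₂-characteristic function on P if and only if the pair (λ(5), λ(6)) is one of the following seven pairs: ((1,1,0,0),(0,0,1,1)), ((1,1,0,0),(1,1,1,1)), ((1,1,0,0),(1,0,1,1)), ((1,1,0,0),(0,1,1,1)), ((1,1,1,1),(0,0,1,1)), ((1,1,1,0),(0,0,1,1)), ((1,1,0,1),(0,0,1,1)). -/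
/-- Elementary formulation of linear independence of four vectors. -/
def indep4 (u1 u2 u3 u4 : Fin 4 → ZMod 2) : Prop :=
  ∀ c1 c2 c3 c4 : ZMod 2, c1 • u1 + c2 • u2 + c3 • u3 + c4 • u4 = 0 →
    c1 = 0 ∧ c2 = 0 ∧ c3 = 0 ∧ c4 = 0

lemma li4 (u1 u2 u3 u4 : Fin 4 → ZMod 2) :
    LinearIndependent (ZMod 2) ![u1, u2, u3, u4] ↔ indep4 u1 u2 u3 u4 := by
  rw [Fintype.linearIndependent_iff]
  constructor
  · intro H c1 c2 c3 c4 hc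
    have h := H ![c1, c2, c3, c4] ?_
    · exact ⟨h 0, h 1, h 2, h 3⟩
    · simpa [Fin.sum_univ_four] using hc
  · intro H g hg
    have h := H (g 0) (g 1) (g 2) (g 3) (by simpa [Fin.sum_univ_four] using hg)
    intro i
    fin_cases i
    · exact h.1
    · exact h.2.1
    · exact h.2.2.1
    · exact h.2.2.2

lemma li_iff (lam : Fin 6 → (Fin 4 → ZMod 2)) (S : Finset (Fin 6))
    (i1 i2 i3 i4 : Fin 6) (h1 : i1 ∈ S) (h2 : i2 ∈ S) (h3 : i3 ∈ S) (h4 : i4 ∈ S)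
    (hbij : Function.Bijective
      (![(⟨i1, h1⟩ : {x : Fin 6 // x ∈ S}), ⟨i2, h2⟩, ⟨i3, h3⟩, ⟨i4, h4⟩])) :
    LinearIndependent (ZMod 2) (fun i : {x : Fin 6 // x ∈ S} => lam i.1) ↔
      indep4 (lam i1) (lam i2) (lam i3) (lam i4) := by
  rw [← linearIndependent_equiv (Equiv.ofBijective _ hbij)]
  have : (fun i : {x : Fin 6 // x ∈ S} => lam i.1) ∘ (Equiv.ofBijective _ hbij) =
      ![lam i1, lam i2, lam i3, lam i4] := by
    funext j; fin_cases j <;> rfl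
  rw [this, li4]

lemma charFn_iff (lam : Fin 6 → (Fin 4 → ZMod 2)) :
    IsCharFn lam ↔
      (indep4 (lam 0) (lam 1) (lam 2) (lam 3) ∧
       indep4 (lam 0) (lam 1) (lam 2) (lam 5) ∧
       indep4 (lam 0) (lam 1) (lam 3) (lam 5) ∧
       indep4 (lam 0) (lam 2) (lam 3) (lam 4) ∧
       indep4 (lam 0) (lam 2) (lam 4) (lam 5) ∧
       indep4 (lam 0) (lam 3) (lam 4) (lam 5) ∧
       indep4 (lam 1) (lam 2) (lam 3) (lam 4) ∧
       indep4 (lam 1) (lam 2) (lam 4) (lam 5) ∧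
       indep4 (lam 1) (lam 3) (lam 4) (lam 5)) := by
  constructor
  · intro hC
    exact ⟨(li_iff lam {0,1,2,3} 0 1 2 3 (by decide) (by decide) (by decide) (by decide)
              (by decide)).mp (hC _ (by decide)),
           (li_iff lam {0,1,2,5} 0 1 2 5 (by decide) (by decide) (by decide) (by decide)
              (by decide)).mp (hC _ (by decide)),
           (li_iff lam {0,1,3,5} 0 1 3 5 (by decide) (by decide) (by decide) (by decide)
              (by decide)).mp (hC _ (by decide)),
           (li_iff lam {0,2,3,4} 0 2 3 4 (by decide) (by decide) (by decide) (by decide)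
              (by decide)).mp (hC _ (by decide)),
           (li_iff lam {0,2,4,5} 0 2 4 5 (by decide) (by decide) (by decide) (by decide)
              (by decide)).mp (hC _ (by decide)),
           (li_iff lam {0,3,4,5} 0 3 4 5 (by decide) (by decide) (by decide) (by decide)
              (by decide)).mp (hC _ (by decide)),
           (li_iff lam {1,2,3,4} 1 2 3 4 (by decide) (by decide) (by decide) (by decide)
              (by decide)).mp (hC _ (by decide)),
           (li_iff lam {1,2,4,5} 1 2 4 5 (by decide) (by decide) (by decide) (by decide)
              (by decide)).mp (hC _ (by decide)),
           (li_iff lam {1,3,4,5} 1 3 4 5 (by decide) (by decide) (by decide) (by decide)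
              (by decide)).mp (hC _ (by decide))⟩
  · rintro ⟨p1, p2, p3, p4, p5, p6, p7, p8, p9⟩ S hS
    simp only [vertexSets, Finset.mem_insert, Finset.mem_singleton] at hS
    rcases hS with rfl | rfl | rfl | rfl | rfl | rfl | rfl | rfl | rfl
    · exact (li_iff lam _ 0 1 2 3 (by decide) (by decide) (by decide) (by decide)
        (by decide)).mpr p1
    · exact (li_iff lam _ 0 1 2 5 (by decide) (by decide) (by decide) (by decide)
        (by decide)).mpr p2
    · exact (li_iff lam _ 0 1 3 5 (by decide) (by decide) (by decide) (by decide)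
        (by decide)).mpr p3
    · exact (li_iff lam _ 0 2 3 4 (by decide) (by decide) (by decide) (by decide)
        (by decide)).mpr p4
    · exact (li_iff lam _ 0 2 4 5 (by decide) (by decide) (by decide) (by decide)
        (by decide)).mpr p5
    · exact (li_iff lam _ 0 3 4 5 (by decide) (by decide) (by decide) (by decide)
        (by decide)).mpr p6
    · exact (li_iff lam _ 1 2 3 4 (by decide) (by decide) (by decide) (by decide)
        (by decide)).mpr p7
    · exact (li_iff lam _ 1 2 4 5 (by decide) (by decide) (by decide) (by decide)
        (by decide)).mpr p8
    · exact (li_iff lam _ 1 3 4 5 (by decide) (by decide) (by decide) (by decide)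
        (by decide)).mpr p9

lemma k1 : indep4 (stdBasis 0) (stdBasis 1) (stdBasis 2) (stdBasis 3) := by
  unfold indep4 stdBasis; decide

lemma k2 : ∀ e f g h : ZMod 2,
    indep4 (stdBasis 0) (stdBasis 1) (stdBasis 2) (vec e f g h) ↔ h = 1 := by
  unfold indep4 stdBasis vec; decide

lemma k3 : ∀ e f g h : ZMod 2,
    indep4 (stdBasis 0) (stdBasis 1) (stdBasis 3) (vec e f g h) ↔ g = 1 := by
  unfold indep4 stdBasis vec; decide

lemma k4 : ∀ a b c d : ZMod 2,
    indep4 (stdBasis 0) (stdBasis 2) (stdBasis 3) (vec a b c d) ↔ b = 1 := by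
  unfold indep4 stdBasis vec; decide

lemma k7 : ∀ a b c d : ZMod 2,
    indep4 (stdBasis 1) (stdBasis 2) (stdBasis 3) (vec a b c d) ↔ a = 1 := by
  unfold indep4 stdBasis vec; decide

set_option maxHeartbeats 1000000 in
lemma k5 : ∀ a b c d e f g h : ZMod 2,
    indep4 (stdBasis 0) (stdBasis 2) (vec a b c d) (vec e f g h) ↔ b * h + d * f = 1 := by
  unfold indep4 stdBasis vec; decide

set_option maxHeartbeats 1000000 in
lemma k6 : ∀ a b c d e f g h : ZMod 2,
    indep4 (stdBasis 0) (stdBasis 3) (vec a b c d) (vec e f g h) ↔ b * g + c * f = 1 := by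
  unfold indep4 stdBasis vec; decide

set_option maxHeartbeats 1000000 in
lemma k8 : ∀ a b c d e f g h : ZMod 2,
    indep4 (stdBasis 1) (stdBasis 2) (vec a b c d) (vec e f g h) ↔ a * h + d * e = 1 := by
  unfold indep4 stdBasis vec; decide

set_option maxHeartbeats 1000000 in
lemma k9 : ∀ a b c d e f g h : ZMod 2,
    indep4 (stdBasis 1) (stdBasis 3) (vec a b c d) (vec e f g h) ↔ a * g + c * e = 1 := by
  unfold indep4 stdBasis vec; decide

lemma vec_ext (a b c d a' b' c' d' : ZMod 2) :
    vec a b c d = vec a' b' c' d' ↔ (a = a' ∧ b = b' ∧ c = c' ∧ d = d') := by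
  constructor
  · intro hh
    exact ⟨congrFun hh 0, congrFun hh 1, congrFun hh 2, congrFun hh 3⟩
  · rintro ⟨rfl, rfl, rfl, rfl⟩; rfl

def keyProp : Prop := ∀ a b c d e f g h : ZMod 2,
    (h = 1 ∧ g = 1 ∧ b = 1 ∧ b * h + d * f = 1 ∧ b * g + c * f = 1 ∧ a = 1 ∧
      a * h + d * e = 1 ∧ a * g + c * e = 1) ↔
      ((a = 1 ∧ b = 1 ∧ c = 0 ∧ d = 0) ∧ (e = 0 ∧ f = 0 ∧ g = 1 ∧ h = 1) ∨
       (a = 1 ∧ b = 1 ∧ c = 0 ∧ d = 0) ∧ (e = 1 ∧ f = 1 ∧ g = 1 ∧ h = 1) ∨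
       (a = 1 ∧ b = 1 ∧ c = 0 ∧ d = 0) ∧ (e = 1 ∧ f = 0 ∧ g = 1 ∧ h = 1) ∨
       (a = 1 ∧ b = 1 ∧ c = 0 ∧ d = 0) ∧ (e = 0 ∧ f = 1 ∧ g = 1 ∧ h = 1) ∨
       (a = 1 ∧ b = 1 ∧ c = 1 ∧ d = 1) ∧ (e = 0 ∧ f = 0 ∧ g = 1 ∧ h = 1) ∨
       (a = 1 ∧ b = 1 ∧ c = 1 ∧ d = 0) ∧ (e = 0 ∧ f = 0 ∧ g = 1 ∧ h = 1) ∨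
       (a = 1 ∧ b = 1 ∧ c = 0 ∧ d = 1) ∧ (e = 0 ∧ f = 0 ∧ g = 1 ∧ h = 1))

instance keyProp.dec : Decidable keyProp := by
  unfold keyProp
  refine @Fintype.decidableForallFintype _ _ (fun a => ?_) _
  refine @Fintype.decidableForallFintype _ _ (fun b => ?_) _
  refine @Fintype.decidableForallFintype _ _ (fun c => ?_) _
  refine @Fintype.decidableForallFintype _ _ (fun d => ?_) _
  refine @Fintype.decidableForallFintype _ _ (fun e => ?_) _
  refine @Fintype.decidableForallFintype _ _ (fun f => ?_) _
  refine @Fintype.decidableForallFintype _ _ (fun g => ?_) _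
  refine @Fintype.decidableForallFintype _ _ (fun h => ?_) _
  infer_instance

set_option maxRecDepth 40000 in
set_option maxHeartbeats 1000000 in
lemma key'' : keyProp := of_decide_eq_true (by rfl)

lemma key (a b c d e f g h : ZMod 2) :
    (indep4 (stdBasis 0) (stdBasis 1) (stdBasis 2) (stdBasis 3) ∧
     indep4 (stdBasis 0) (stdBasis 1) (stdBasis 2) (vec e f g h) ∧
     indep4 (stdBasis 0) (stdBasis 1) (stdBasis 3) (vec e f g h) ∧
     indep4 (stdBasis 0) (stdBasis 2) (stdBasis 3) (vec a b c d) ∧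
     indep4 (stdBasis 0) (stdBasis 2) (vec a b c d) (vec e f g h) ∧
     indep4 (stdBasis 0) (stdBasis 3) (vec a b c d) (vec e f g h) ∧
     indep4 (stdBasis 1) (stdBasis 2) (stdBasis 3) (vec a b c d) ∧
     indep4 (stdBasis 1) (stdBasis 2) (vec a b c d) (vec e f g h) ∧
     indep4 (stdBasis 1) (stdBasis 3) (vec a b c d) (vec e f g h)) ↔
      ((vec a b c d = vec 1 1 0 0 ∧ vec e f g h = vec 0 0 1 1) ∨
       (vec a b c d = vec 1 1 0 0 ∧ vec e f g h = vec 1 1 1 1) ∨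
       (vec a b c d = vec 1 1 0 0 ∧ vec e f g h = vec 1 0 1 1) ∨
       (vec a b c d = vec 1 1 0 0 ∧ vec e f g h = vec 0 1 1 1) ∨
       (vec a b c d = vec 1 1 1 1 ∧ vec e f g h = vec 0 0 1 1) ∨
       (vec a b c d = vec 1 1 1 0 ∧ vec e f g h = vec 0 0 1 1) ∨
       (vec a b c d = vec 1 1 0 1 ∧ vec e f g h = vec 0 0 1 1)) := by
  rw [iff_true_intro k1, true_and, k2, k3, k4, k5, k6, k7, k8, k9]
  simp only [vec_ext]
  exact key'' a b c d e f g h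

/-- If `λ(i) = e_i` for `i = 1, 2, 3, 4`, then `λ` is a `Z₂`-characteristic function
on `P` iff `(λ(F₅), λ(F₆))` is one of the listed seven pairs. -/
theorem stmt7 (lam : Fin 6 → (Fin 4 → ZMod 2))
    (h4 : ∀ i : Fin 4, lam (Fin.castLE (by norm_num) i) = stdBasis i) :
    IsCharFn lam ↔
      (lam 4, lam 5) ∈ ({(vec 1 1 0 0, vec 0 0 1 1), (vec 1 1 0 0, vec 1 1 1 1),
        (vec 1 1 0 0, vec 1 0 1 1), (vec 1 1 0 0, vec 0 1 1 1),
        (vec 1 1 1 1, vec 0 0 1 1), (vec 1 1 1 0, vec 0 0 1 1),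
        (vec 1 1 0 1, vec 0 0 1 1)} :
        Set ((Fin 4 → ZMod 2) × (Fin 4 → ZMod 2))) := by
  have e0 : lam 0 = stdBasis 0 := h4 0
  have e1 : lam 1 = stdBasis 1 := h4 1
  have e2 : lam 2 = stdBasis 2 := h4 2
  have e3 : lam 3 = stdBasis 3 := h4 3
  obtain ⟨a, b, c, d, h5⟩ : ∃ a b c d, lam 4 = vec a b c d :=
    ⟨_, _, _, _, by funext j; fin_cases j <;> rfl⟩
  obtain ⟨e, f, g, h, h6⟩ : ∃ e f g h, lam 5 = vec e f g h :=
    ⟨_, _, _, _, by funext j; fin_cases j <;> rfl⟩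
  rw [charFn_iff, e0, e1, e2, e3, h5, h6, key a b c d e f g h]
  simp only [Set.mem_insert_iff, Set.mem_singleton_iff, Prod.mk.injEq]
end
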